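/- For n qubits and s ∈ [0,1], let H^B_s = Σ_{k=1}^n (h_s)_k act on ℂ^{2^n}, where (h_s)_k applies the 2×2 matrix h_s = (1−s)|−⟩⟨−| + s|1⟩⟨1| to the k-th qubit and the identity to all other qubits. Then the eigenvalues of H^B_s are exactly λ_ℓ(s) = (n−ℓ)λ₊(s) + ℓλ₋(s) for ℓ ∈ {0,1,…,n}, where λ_±(s) = (1 ± √(1 − 2s + 2s²))/2, the gap between the second-smallest and smallest eigenvalues of H^B_s is √(1 − 2s + 2s²), and the minimum of this gap over s ∈ [0,1] equals 1/√2. -/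

import Mathlib

/-
The one-qubit matrix `h_s` has eigenvalues `λ± = (1 ± g)/2`, `g = √(1 - 2s + 2s²)`, and the
explicit (non-normalised) eigenbasis `P = [[1 - s, s + g], [-(s + g), 1 - s]]`. The tensor power
`P^{⊗n}` conjugates `H^B_s = Σ_k (h_s)_k` to the diagonal matrix whose entry at a basis vector `y`
with `ℓ` ones is `(n - ℓ) λ₊ + ℓ λ₋`; this gives the characteristic polynomial of `H^B_s`, hence
its eigenvalues. The smallest one, `n λ₋`, is simple (only `y = 1⋯1` attains it) and every other
is at least `n λ₋ + (λ₊ - λ₋)`, attained at `ℓ = n - 1`. So the gap is `λ₊ - λ₋ = g`, and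
`g² = 1/2 + (2s - 1)²/2` is minimal at `s = 1/2`.
-/

/-- The eigenvalues of a Hermitian matrix, sorted in nondecreasing order
(counted with multiplicity). -/
noncomputable def sortedEigs {m : Type*} [Fintype m] [DecidableEq m] {A : Matrix m m ℂ}
    (hA : A.IsHermitian) : Fin (Fintype.card m) → ℝ :=
  hA.eigenvalues₀ ∘ Tuple.sort hA.eigenvalues₀

/-- The single-qubit matrix `h` acting on the `k`-th of `n` qubits (identity elsewhere),
as a matrix on the `n`-fold tensor product `ℂ^{2^n}`, whose computational basis is indexed
by `Fin n → Fin 2`. -/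
def onQubit (n : ℕ) (k : Fin n) (h : Matrix (Fin 2) (Fin 2) ℂ) :
    Matrix (Fin n → Fin 2) (Fin n → Fin 2) ℂ :=
  Matrix.of fun x y => h (x k) (y k) * ∏ j ∈ Finset.univ.erase k, (if x j = y j then 1 else 0)

open Matrix Polynomial Finset

namespace Matrix

variable {ι m R : Type*} [Fintype ι] [CommRing R]

def piKronecker (A : ι → Matrix m m R) : Matrix (ι → m) (ι → m) R :=
  of fun x y => ∏ k, A k (x k) (y k)

theorem piKronecker_mul [DecidableEq ι] [Fintype m] (A B : ι → Matrix m m R) :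
    piKronecker A * piKronecker B = piKronecker (A * B) := by
  ext x y
  simp only [piKronecker, mul_apply, of_apply, Pi.mul_apply, ← prod_mul_distrib,
    prod_univ_sum, Fintype.piFinset_univ]

theorem piKronecker_diagonal [DecidableEq ι] [DecidableEq m] (d : ι → m → R) :
    piKronecker (fun k => diagonal (d k)) = diagonal fun y => ∏ k, d k (y k) := by
  ext x y
  by_cases hxy : x = y
  · simp [piKronecker, hxy]
  · obtain ⟨k, hk⟩ := Function.ne_iff.mp hxy
    simp [piKronecker, diagonal_apply_ne _ hxy, prod_eq_zero (mem_univ k), hk]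

theorem piKronecker_one [DecidableEq ι] [DecidableEq m] :
    piKronecker (fun _ => 1 : ι → Matrix m m R) = 1 := by
  simpa using piKronecker_diagonal (fun (_ : ι) (_ : m) => (1 : R))

theorem charpoly_eq_of_mul_eq_mul {n K : Type*} [Fintype n] [DecidableEq n] [Field K]
    {M N Q Q' : Matrix n n K} (hQ : Q' * Q = 1) (h : M * Q = Q * N) :
    M.charpoly = N.charpoly := by
  have hM : M = Q * (N * Q') := by
    rw [← Matrix.mul_assoc, ← h, Matrix.mul_assoc, mul_eq_one_comm.mp hQ, Matrix.mul_one]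
  rw [hM, charpoly_mul_comm, Matrix.mul_assoc, hQ, Matrix.mul_one]

theorem exists_mulVec_eq_smul_iff_isRoot_charpoly {n K : Type*} [Fintype n] [DecidableEq n]
    [Field K] (M : Matrix n n K) (μ : K) :
    (∃ v ≠ 0, M *ᵥ v = μ • v) ↔ M.charpoly.IsRoot μ := by
  rw [← charpoly_toLin', ← Module.End.hasEigenvalue_iff_isRoot_charpoly,
    Module.End.hasEigenvalue_iff, Submodule.ne_bot_iff]
  simp [and_comm]

theorem exists_mulVec_eq_smul_iff_of_charpoly_eq {n ι K : Type*} [Fintype n] [DecidableEq n]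
    [Fintype ι] [Field K] {M : Matrix n n K} {d : ι → K}
    (h : M.charpoly = ∏ y, (X - C (d y))) (μ : K) :
    (∃ v ≠ 0, M *ᵥ v = μ • v) ↔ ∃ y, d y = μ := by
  rw [exists_mulVec_eq_smul_iff_isRoot_charpoly, h, isRoot_prod]
  simp [sub_eq_zero, eq_comm]

end Matrix

theorem onQubit_eq_piKronecker (n : ℕ) (k : Fin n) (A : Matrix (Fin 2) (Fin 2) ℂ) :
    onQubit n k A = piKronecker (Function.update 1 k A) := by
  ext x y
  rw [onQubit, piKronecker, of_apply, of_apply, ← mul_prod_erase _ _ (mem_univ k)]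
  congr 1
  · simp
  · refine prod_congr rfl fun j hj => ?_
    simp [Function.update_of_ne (ne_of_mem_erase hj), one_apply]

theorem onQubit_diagonal (n : ℕ) (k : Fin n) (d : Fin 2 → ℂ) :
    onQubit n k (diagonal d) = diagonal fun y => d (y k) := by
  have hupdate : Function.update (1 : Fin n → Matrix (Fin 2) (Fin 2) ℂ) k (diagonal d)
      = fun j => diagonal (Function.update (1 : Fin n → Fin 2 → ℂ) k d j) := by
    funext j
    by_cases hj : j = k
    · subst hj; simp
    · simp [hj]
  rw [onQubit_eq_piKronecker, hupdate, piKronecker_diagonal]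
  congr 1
  funext y
  rw [← mul_prod_erase _ _ (mem_univ k), prod_eq_one fun j hj => by
    simp [Function.update_of_ne (ne_of_mem_erase hj)]]
  simp

theorem onQubit_mul_piKronecker {n : ℕ} (k : Fin n) {A B P : Matrix (Fin 2) (Fin 2) ℂ}
    (h : A * P = P * B) :
    onQubit n k A * piKronecker (fun _ => P) = piKronecker (fun _ => P) * onQubit n k B := by
  simp only [onQubit_eq_piKronecker, piKronecker_mul]
  congr 1
  funext j
  by_cases hj : j = k
  · subst hj; simpa using h
  · simp [hj]

theorem charpoly_sum_onQubit (n : ℕ) {A P : Matrix (Fin 2) (Fin 2) ℂ} {d : Fin 2 → ℂ}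
    (hP : IsUnit P.det) (h : A * P = P * diagonal d) :
    (∑ k, onQubit n k A).charpoly = ∏ y : Fin n → Fin 2, (X - C (∑ k, d (y k))) := by
  have hinv : piKronecker (fun _ => P⁻¹) * piKronecker (fun (_ : Fin n) => P) = 1 := by
    rw [piKronecker_mul, ← piKronecker_one]
    exact congrArg _ (funext fun _ => nonsing_inv_mul P hP)
  have hconj : (∑ k, onQubit n k A) * piKronecker (fun _ => P)
      = piKronecker (fun _ => P) * diagonal fun y => ∑ k, d (y k) := by
    have hdiag : diagonal (fun y : Fin n → Fin 2 => ∑ k, d (y k))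
        = ∑ k : Fin n, diagonal fun y => d (y k) := by
      ext x y
      by_cases hxy : x = y <;> simp [Matrix.sum_apply, hxy]
    rw [hdiag, sum_mul, mul_sum]
    exact sum_congr rfl fun k _ => by rw [onQubit_mul_piKronecker k h, onQubit_diagonal]
  rw [charpoly_eq_of_mul_eq_mul hinv hconj, charpoly_diagonal]

theorem map_sortedEigs_of_charpoly_eq {n ι : Type*} [Fintype n] [DecidableEq n] [Fintype ι]
    {A : Matrix n n ℂ} (hA : A.IsHermitian) {d : ι → ℝ}
    (h : A.charpoly = ∏ y, (X - C (d y : ℂ))) :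
    univ.val.map (sortedEigs hA) = univ.val.map d := by
  have hroots := hA.roots_charpoly_eq_eigenvalues₀
  rw [h, Polynomial.roots_prod _ _ (prod_ne_zero_iff.mpr fun y _ => X_sub_C_ne_zero _)] at hroots
  simp only [roots_X_sub_C, Multiset.bind_singleton] at hroots
  rw [sortedEigs, ← Multiset.map_map, Multiset.map_univ_val_equiv]
  refine Multiset.map_injective Complex.ofReal_injective ?_
  rw [Multiset.map_map, Multiset.map_map]
  exact hroots.symm

theorem sum_comp_fin_two {ι R : Type*} [Fintype ι] [CommRing R] (f : Fin 2 → R) (y : ι → Fin 2) :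
    ∑ k, f (y k) = (Fintype.card ι - #{k | y k = 1}) * f 0 + #{k | y k = 1} * f 1 := by
  have hf : ∀ i, f i = f 0 + if i = 1 then f 1 - f 0 else 0 := fun i => by
    fin_cases i <;> simp
  rw [sum_congr rfl fun k _ => hf (y k)]
  simp only [sum_add_distrib, sum_ite, sum_const_zero, sum_const, nsmul_eq_mul, card_univ]
  ring

theorem exists_card_filter_eq_one {ι : Type*} [Fintype ι] {ℓ : ℕ} (hℓ : ℓ ≤ Fintype.card ι) :
    ∃ y : ι → Fin 2, #{k | y k = 1} = ℓ := by
  classical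
  obtain ⟨t, -, ht⟩ := exists_subset_card_eq (s := (univ : Finset ι)) (by simpa using hℓ)
  refine ⟨fun k => if k ∈ t then 1 else 0, ?_⟩
  convert ht using 2
  ext k
  by_cases hk : k ∈ t <;> simp [hk]

theorem Monotone.apply_zero_one_of_map_eq {N : ℕ} {ι : Type*} [Fintype ι] {φ : Fin N → ℝ}
    (hφ : Monotone φ) {d : ι → ℝ} (hmap : univ.val.map φ = univ.val.map d) {y₀ y₁ : ι}
    (hlt : d y₀ < d y₁) (hsecond : ∀ y ≠ y₀, d y₁ ≤ d y) (hN : 1 < N) :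
    φ ⟨0, by omega⟩ = d y₀ ∧ φ ⟨1, hN⟩ = d y₁ := by
  set i₀ : Fin N := ⟨0, by omega⟩
  set i₁ : Fin N := ⟨1, hN⟩
  have hrange : ∀ a, (∃ i, φ i = a) ↔ ∃ y, d y = a := fun a => by
    simpa using congrArg (a ∈ ·) hmap
  have hunique : ∀ i i', φ i = d y₀ → φ i' = d y₀ → i = i' := by
    have hfilter : ({y | d y₀ = d y} : Finset ι) = {y₀} := by
      ext y
      by_cases hy : y = y₀
      · simp [hy]
      · simp only [mem_filter, mem_univ, true_and, mem_singleton, hy, iff_false]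
        linarith [hsecond y hy]
    have hcount : #({i | d y₀ = φ i} : Finset (Fin N)) = #({y | d y₀ = d y} : Finset ι) := by
      have := congrArg (Multiset.count (d y₀)) hmap
      rwa [Multiset.count_map, Multiset.count_map] at this
    rw [hfilter, card_singleton] at hcount
    intro i i' hi hi'
    exact card_le_one.mp hcount.le i (by simp [hi]) i' (by simp [hi'])
  have h₀ : φ i₀ = d y₀ := by
    obtain ⟨j, hj⟩ := (hrange _).2 ⟨y₀, rfl⟩
    obtain ⟨y, hy⟩ := (hrange _).1 ⟨i₀, rfl⟩
    by_contra hne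
    have hy₀ : y ≠ y₀ := by rintro rfl; exact hne hy.symm
    linarith [hφ (Fin.mk_le_of_le_val (Nat.zero_le j) : i₀ ≤ j), hsecond y hy₀]
  refine ⟨h₀, le_antisymm ?_ ?_⟩
  · obtain ⟨j, hj⟩ := (hrange _).2 ⟨y₁, rfl⟩
    have hj₀ : j ≠ i₀ := by rintro rfl; linarith
    exact hj ▸ hφ (Fin.mk_le_of_le_val (Nat.one_le_iff_ne_zero.mpr fun h => hj₀ (Fin.ext h)))
  · obtain ⟨y, hy⟩ := (hrange _).1 ⟨i₁, rfl⟩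
    have hy₀ : y ≠ y₀ := by
      rintro rfl
      exact absurd (hunique i₀ i₁ h₀ hy.symm) (by simp [i₀, i₁, Fin.ext_iff])
    exact hy ▸ hsecond y hy₀

theorem card_filter_eq_one_lt_of_ne {ι : Type*} [Fintype ι] {y : ι → Fin 2}
    (hy : y ≠ fun _ => 1) : #{k | y k = 1} < Fintype.card ι := by
  obtain ⟨k, hk⟩ := Function.ne_iff.mp hy
  rw [card_lt_iff_ne_univ, Ne, filter_eq_self]
  exact fun h => hk (h k (mem_univ k))

theorem range_card_sub_mul_add_mul {ι : Type*} [Fintype ι] (a b : ℝ) :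
    Set.range (fun y : ι → Fin 2 => (Fintype.card ι - #{k | y k = 1}) * a + #{k | y k = 1} * b)
      = {μ | ∃ ℓ : ℕ, ℓ ≤ Fintype.card ι ∧ μ = (Fintype.card ι - ℓ) * a + ℓ * b} := by
  ext μ
  constructor
  · rintro ⟨y, rfl⟩
    exact ⟨_, card_le_univ _, rfl⟩
  · rintro ⟨ℓ, hℓ, rfl⟩
    obtain ⟨y, hy⟩ := exists_card_filter_eq_one hℓ
    exact ⟨y, by simp only [hy]⟩

theorem sortedEigs_one_sub_sortedEigs_zero {ι : Type*} [Fintype ι] [DecidableEq ι] [Nonempty ι]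
    {A : Matrix (ι → Fin 2) (ι → Fin 2) ℂ} (hA : A.IsHermitian) {a b : ℝ} (hba : b < a)
    (h : A.charpoly = ∏ y : ι → Fin 2,
      (X - C (((Fintype.card ι - #{k | y k = 1}) * a + #{k | y k = 1} * b : ℝ) : ℂ))) :
    sortedEigs hA ⟨1, Fintype.one_lt_card⟩ - sortedEigs hA ⟨0, Fintype.card_pos⟩ = a - b := by
  set E : (ι → Fin 2) → ℝ := fun y => (Fintype.card ι - #{k | y k = 1}) * a + #{k | y k = 1} * b
  have hE : ∀ y, E y = Fintype.card ι * b + (Fintype.card ι - #{k | y k = 1}) * (a - b) :=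
    fun y => by ring
  have hn : 1 ≤ Fintype.card ι := Fintype.card_pos
  obtain ⟨y₁, hy₁⟩ := exists_card_filter_eq_one (Nat.sub_le (Fintype.card ι) 1)
  have hE₀ : E (fun _ => 1) = Fintype.card ι * b := by simp [hE]
  have hE₁ : E y₁ = Fintype.card ι * b + (a - b) := by
    rw [hE, hy₁, Nat.cast_sub hn]
    ring
  have hsecond : ∀ y ≠ (fun _ => 1), E y₁ ≤ E y := fun y hy => by
    have hℓ : (#{k | y k = 1} : ℝ) + 1 ≤ Fintype.card ι := by
      exact_mod_cast card_filter_eq_one_lt_of_ne hy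
    rw [hE₁, hE]
    nlinarith
  obtain ⟨h₀, h₁⟩ := (Tuple.monotone_sort hA.eigenvalues₀).apply_zero_one_of_map_eq
    (map_sortedEigs_of_charpoly_eq hA h) (by linarith) hsecond Fintype.one_lt_card
  rw [sortedEigs, h₀, h₁]
  change E y₁ - E (fun _ => 1) = a - b
  rw [hE₀, hE₁]
  ring

section SingleQubit

variable {K : Type*} [Field K]

def singleQubitH (s : K) : Matrix (Fin 2) (Fin 2) K :=
  !![(1 - s) / 2, -(1 - s) / 2; -(1 - s) / 2, (1 + s) / 2]

def singleQubitEigenbasis (s g : K) : Matrix (Fin 2) (Fin 2) K :=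
  !![1 - s, s + g; -(s + g), 1 - s]

theorem singleQubitH_mul_eigenbasis [CharZero K] {s g : K} (hg : g ^ 2 = 1 - 2 * s + 2 * s ^ 2) :
    singleQubitH s * singleQubitEigenbasis s g
      = singleQubitEigenbasis s g * diagonal ![(1 + g) / 2, (1 - g) / 2] := by
  ext i j
  fin_cases i <;> fin_cases j <;>
    simp [singleQubitH, singleQubitEigenbasis, mul_apply, Fin.sum_univ_two] <;>
    first | ring1 | linear_combination (1 / 2 : K) * hg

theorem det_singleQubitEigenbasis {s g : K} (hg : g ^ 2 = 1 - 2 * s + 2 * s ^ 2) :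
    (singleQubitEigenbasis s g).det = 2 * g * (g + s) := by
  rw [singleQubitEigenbasis, det_fin_two_of]
  linear_combination -hg

end SingleQubit

theorem smul_vecMulVec_add_smul_vecMulVec_eq_singleQubitH (s : ℝ) :
    ((1 - s : ℝ) : ℂ) • vecMulVec ![(((Real.sqrt 2)⁻¹ : ℝ) : ℂ), ((-(Real.sqrt 2)⁻¹ : ℝ) : ℂ)]
        (star ![(((Real.sqrt 2)⁻¹ : ℝ) : ℂ), ((-(Real.sqrt 2)⁻¹ : ℝ) : ℂ)])
      + ((s : ℝ) : ℂ) • vecMulVec ![(0 : ℂ), 1] (star ![(0 : ℂ), 1])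
      = singleQubitH (s : ℂ) := by
  have hsqrt : ((Real.sqrt 2 : ℝ) : ℂ)⁻¹ ^ 2 = 1 / 2 := by
    rw [inv_pow, ← Complex.ofReal_pow, Real.sq_sqrt zero_le_two]
    norm_num
  ext i j
  rw [Matrix.add_apply, Matrix.smul_apply, Matrix.smul_apply, vecMulVec_apply, vecMulVec_apply]
  fin_cases i <;> fin_cases j <;> simp [singleQubitH] <;>
    first | linear_combination (1 - (s : ℂ)) * hsqrt | linear_combination ((s : ℂ) - 1) * hsqrt

-- `1 - 2s + 2s²` is the discriminant of `t² - t + s(1 - s)/2`, the characteristic polynomial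
-- of `h_s`.
theorem sqrt_discr_pos_and_add_pos (s : ℝ) :
    0 < Real.sqrt (1 - 2 * s + 2 * s ^ 2) ∧ 0 < Real.sqrt (1 - 2 * s + 2 * s ^ 2) + s := by
  have hD : 0 ≤ 1 - 2 * s + 2 * s ^ 2 := by nlinarith [sq_nonneg (2 * s - 1)]
  have hg := Real.sq_sqrt hD
  have hg0 := Real.sqrt_nonneg (1 - 2 * s + 2 * s ^ 2)
  constructor <;> nlinarith [sq_nonneg (1 - s), sq_nonneg (2 * s - 1)]

theorem charpoly_sum_onQubit_singleQubitH (n : ℕ) (s : ℝ) :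
    (∑ k, onQubit n k (singleQubitH (s : ℂ))).charpoly
      = ∏ y : Fin n → Fin 2, (X - C (((n - #{k | y k = 1}) * ((1 + √(1 - 2 * s + 2 * s ^ 2)) / 2)
          + #{k | y k = 1} * ((1 - √(1 - 2 * s + 2 * s ^ 2)) / 2) : ℝ) : ℂ)) := by
  set g := √(1 - 2 * s + 2 * s ^ 2)
  have hg : (g : ℂ) ^ 2 = 1 - 2 * s + 2 * s ^ 2 := by
    rw [← Complex.ofReal_pow, Real.sq_sqrt (by nlinarith [sq_nonneg (2 * s - 1)])]
    push_cast
    ring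
  obtain ⟨hg₀, hgs⟩ := sqrt_discr_pos_and_add_pos s
  have hdet : IsUnit (singleQubitEigenbasis (s : ℂ) g).det := by
    rw [det_singleQubitEigenbasis hg, isUnit_iff_ne_zero]
    exact_mod_cast (by positivity : (2 * g * (g + s) : ℝ) ≠ 0)
  rw [charpoly_sum_onQubit n hdet (singleQubitH_mul_eigenbasis hg)]
  refine prod_congr rfl fun y _ => ?_
  rw [sum_comp_fin_two, Fintype.card_fin]
  push_cast
  simp

/-- for `H^B_s = Σ_{k=1}^n (h_s)_k` with `h_s = (1−s)|−⟩⟨−| + s|1⟩⟨1|`, the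
eigenvalues of `H^B_s` are exactly `λ_ℓ(s) = (n−ℓ)λ₊(s) + ℓλ₋(s)`, `ℓ ∈ {0,…,n}`, where
`λ±(s) = (1 ± √(1−2s+2s²))/2`; the spectral gap of `H^B_s` is `√(1−2s+2s²)`, and the
minimum of this gap over `s ∈ [0,1]` equals `1/√2`. -/
theorem stmt_3 (n : ℕ) (hn : 1 ≤ n) (minus one : Fin 2 → ℂ)
    (hminus : minus = ![(((Real.sqrt 2)⁻¹ : ℝ) : ℂ), ((-(Real.sqrt 2)⁻¹ : ℝ) : ℂ)])
    (hone : one = ![0, 1])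
    (h : ℝ → Matrix (Fin 2) (Fin 2) ℂ)
    (hdef : ∀ s : ℝ, h s = ((1 - s : ℝ) : ℂ) • Matrix.vecMulVec minus (star minus)
      + ((s : ℝ) : ℂ) • Matrix.vecMulVec one (star one))
    (HB : ℝ → Matrix (Fin n → Fin 2) (Fin n → Fin 2) ℂ)
    (hHB : ∀ s : ℝ, HB s = ∑ k : Fin n, onQubit n k (h s))
    (hherm : ∀ s : ℝ, (HB s).IsHermitian)
    (lamp lamm : ℝ → ℝ)
    (hlamp : ∀ s, lamp s = (1 + Real.sqrt (1 - 2 * s + 2 * s ^ 2)) / 2)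
    (hlamm : ∀ s, lamm s = (1 - Real.sqrt (1 - 2 * s + 2 * s ^ 2)) / 2) :
    (∀ s ∈ Set.Icc (0 : ℝ) 1,
      {μ : ℝ | ∃ v : (Fin n → Fin 2) → ℂ, v ≠ 0 ∧ (HB s).mulVec v = (μ : ℂ) • v}
        = {μ : ℝ | ∃ ℓ : ℕ, ℓ ≤ n ∧ μ = ((n : ℝ) - ℓ) * lamp s + (ℓ : ℝ) * lamm s}) ∧
    (∀ s ∈ Set.Icc (0 : ℝ) 1,
      sortedEigs (hherm s) ⟨1, by simpa using Nat.one_lt_two_pow_iff.mpr (by omega)⟩ -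
          sortedEigs (hherm s) ⟨0, by simp⟩ = Real.sqrt (1 - 2 * s + 2 * s ^ 2)) ∧
    sortedEigs (hherm (1 / 2)) ⟨1, by simpa using Nat.one_lt_two_pow_iff.mpr (by omega)⟩ -
        sortedEigs (hherm (1 / 2)) ⟨0, by simp⟩ = 1 / Real.sqrt 2 ∧
    ∀ s ∈ Set.Icc (0 : ℝ) 1,
      1 / Real.sqrt 2 ≤
        sortedEigs (hherm s) ⟨1, by simpa using Nat.one_lt_two_pow_iff.mpr (by omega)⟩ -
          sortedEigs (hherm s) ⟨0, by simp⟩ := by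
  have : Nonempty (Fin n) := ⟨⟨0, hn⟩⟩
  have hchar : ∀ s, (HB s).charpoly = ∏ y : Fin n → Fin 2,
      (X - C (((n - #{k | y k = 1}) * lamp s + #{k | y k = 1} * lamm s : ℝ) : ℂ)) := fun s => by
    rw [hHB, hdef, hminus, hone, smul_vecMulVec_add_smul_vecMulVec_eq_singleQubitH,
      charpoly_sum_onQubit_singleQubitH,
      hlamp, hlamm]
  have hgap : ∀ s, sortedEigs (hherm s) ⟨1, Fintype.one_lt_card⟩
      - sortedEigs (hherm s) ⟨0, Fintype.card_pos⟩ = √(1 - 2 * s + 2 * s ^ 2) := fun s => by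
    have hpos := (sqrt_discr_pos_and_add_pos s).1
    rw [sortedEigs_one_sub_sortedEigs_zero (a := lamp s) (b := lamm s) (hherm s)
      (by rw [hlamp, hlamm]; linarith)
      (by simpa using hchar s), hlamp, hlamm]
    ring
  have hhalf : 1 / √2 = √(1 - 2 * (1 / 2 : ℝ) + 2 * (1 / 2) ^ 2) := by
    rw [one_div, ← Real.sqrt_inv]
    norm_num
  refine ⟨fun s _ => ?_, fun s _ => hgap s, (hgap _).trans hhalf.symm, fun s _ => ?_⟩
  · ext μ
    have hrange := Set.ext_iff.mp (range_card_sub_mul_add_mul (ι := Fin n) (lamp s) (lamm s)) μ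
    simp only [Set.mem_range, Set.mem_ofPred_eq, Fintype.card_fin] at hrange
    rw [Set.mem_ofPred_eq, Set.mem_ofPred_eq, exists_mulVec_eq_smul_iff_of_charpoly_eq (hchar s)]
    exact_mod_cast hrange
  · rw [hgap, hhalf]
    exact Real.sqrt_le_sqrt (by nlinarith [sq_nonneg (2 * s - 1)])
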